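/- The error bound of Babai's nearest plane algorithm is tight: for linearly independent a₁,…,a_c with Gram–Schmidt vectors ã₁,…,ã_c, there exists a target y (namely a corner of the fundamental hyper-cuboid, y = (1/2)Σⱼ ãⱼ) such that the closest point of the form A z with z the Babai output satisfies ‖A z − y‖² = (1/4) Σⱼ ‖ãⱼ‖². -/

import Mathlib

open Matrix
open scoped RealInnerProductSpace

/-- Gram–Schmidt orthogonalization of a finite family (the unnormalized
Gram–Schmidt vectors `ãⱼ = aⱼ − Σ_{k<j} (⟪ã_k,aⱼ⟫/‖ã_k‖²) ã_k`). -/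
noncomputable def gramSchmidtFin {n c : ℕ} (a : Fin c → EuclideanSpace ℝ (Fin n)) :
    Fin c → EuclideanSpace ℝ (Fin n) :=
  letI : WellFoundedLT (Fin c) := inferInstance
  InnerProductSpace.gramSchmidt ℝ a


/-- Rounding to the nearest integer, with ties broken consistently downwards
(so that `roundHalfDown (1/2) = 0`, giving rounding error exactly `1/2`). -/
noncomputable def roundHalfDown (x : ℝ) : ℤ := ⌈x - 1 / 2⌉

/-- The residual vector of Babai's nearest plane algorithm after `k` steps
(processing dimensions back-to-front: step `k+1` handles index `c-(k+1)`),
with consistent tie-breaking at halfway points. -/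
noncomputable def babaiRes {n c : ℕ} (a gs : Fin c → EuclideanSpace ℝ (Fin n))
    (y : EuclideanSpace ℝ (Fin n)) : ℕ → EuclideanSpace ℝ (Fin n)
  | 0 => y
  | (k+1) =>
      if h : c - (k+1) < c then
        let i : Fin c := ⟨c - (k+1), h⟩
        let r := babaiRes a gs y k
        r - ((roundHalfDown (⟪gs i, r⟫ / ⟪gs i, a i⟫) : ℤ) : ℝ) • a i
      else babaiRes a gs y k

/-- The integer coefficients output by Babai's nearest plane algorithm. -/
noncomputable def babaiZ {n c : ℕ} (a gs : Fin c → EuclideanSpace ℝ (Fin n))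
    (y : EuclideanSpace ℝ (Fin n)) (j : Fin c) : ℤ :=
  roundHalfDown (⟪gs j, babaiRes a gs y (c - 1 - (j : ℕ))⟫ / ⟪gs j, a j⟫)

/-!
The corner `y = ½ Σⱼ ãⱼ` of the fundamental cuboid has coefficient exactly `½` along every
`ãᵢ`, a tie which is rounded to `0`. So Babai's algorithm never moves away from `y`, outputs
`z = 0`, and the error is `‖y‖² = ¼ Σⱼ ‖ãⱼ‖²` by Pythagoras.
-/

open InnerProductSpace

section Orthogonal

variable {E ι : Type*} [NormedAddCommGroup E] [InnerProductSpace ℝ E] [Fintype ι]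

theorem inner_sum_eq_norm_sq_of_pairwise_inner_eq_zero {v : ι → E}
    (hv : Pairwise fun i j => ⟪v i, v j⟫ = 0) (i : ι) :
    ⟪v i, ∑ j, v j⟫ = ‖v i‖ ^ 2 := by
  rw [inner_sum, Finset.sum_eq_single i (fun j _ hji => hv hji.symm) (by simp),
    real_inner_self_eq_norm_sq]

theorem norm_sum_sq_of_pairwise_inner_eq_zero {v : ι → E}
    (hv : Pairwise fun i j => ⟪v i, v j⟫ = 0) :
    ‖∑ j, v j‖ ^ 2 = ∑ j, ‖v j‖ ^ 2 := by
  rw [← real_inner_self_eq_norm_sq, sum_inner]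
  exact Finset.sum_congr rfl fun i _ => inner_sum_eq_norm_sq_of_pairwise_inner_eq_zero hv i

end Orthogonal

theorem inner_gramSchmidt_self_right {E ι : Type*} [NormedAddCommGroup E]
    [InnerProductSpace ℝ E] [LinearOrder ι] [LocallyFiniteOrderBot ι] [WellFoundedLT ι]
    (f : ι → E) (i : ι) :
    ⟪gramSchmidt ℝ f i, f i⟫ = ‖gramSchmidt ℝ f i‖ ^ 2 := by
  conv_lhs => rw [gramSchmidt_def'' ℝ f i]
  rw [inner_add_right, inner_sum, real_inner_self_eq_norm_sq, add_eq_left]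
  refine Finset.sum_eq_zero fun k hk => ?_
  rw [real_inner_smul_right,
    gramSchmidt_orthogonal ℝ f (Finset.mem_Iio.mp hk).ne', mul_zero]

theorem roundHalfDown_half : roundHalfDown (1 / 2) = 0 := by
  norm_num [roundHalfDown]

section Babai

variable {n c : ℕ} {a gs : Fin c → EuclideanSpace ℝ (Fin n)} {y : EuclideanSpace ℝ (Fin n)}

theorem babaiRes_eq_self (hy : ∀ i, roundHalfDown (⟪gs i, y⟫ / ⟪gs i, a i⟫) = 0) (k : ℕ) :
    babaiRes a gs y k = y := by
  induction k with
  | zero => rfl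
  | succ k ih =>
    rw [babaiRes]
    split
    · simp only [ih, hy, Int.cast_zero, zero_smul, sub_zero]
    · exact ih

theorem babaiZ_eq_zero (hy : ∀ i, roundHalfDown (⟪gs i, y⟫ / ⟪gs i, a i⟫) = 0) (j : Fin c) :
    babaiZ a gs y j = 0 := by
  rw [babaiZ, babaiRes_eq_self hy, hy]

end Babai

/-- Babai's error bound is tight: for the corner target
`y = (1/2) Σⱼ gsⱼ` of the fundamental hyper-cuboid, the Babai output `z` satisfies
`‖A z − y‖² = (1/4) Σⱼ ‖gsⱼ‖²`. -/
theorem babai_error_bound_tight {n c : ℕ} (a : Fin c → EuclideanSpace ℝ (Fin n))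
    (ha : LinearIndependent ℝ a)
    (y : EuclideanSpace ℝ (Fin n)) (hy : y = (1 / 2 : ℝ) • ∑ j, gramSchmidtFin a j) :
    ‖(∑ j, (babaiZ a (gramSchmidtFin a) y j : ℝ) • a j) - y‖ ^ 2
      = (1 / 4) * ∑ j, ‖gramSchmidtFin a j‖ ^ 2 := by
  have hortho : Pairwise fun i j => ⟪gramSchmidtFin a i, gramSchmidtFin a j⟫ = 0 :=
    gramSchmidt_pairwise_orthogonal ℝ a
  have hcoeff (i : Fin c) : ⟪gramSchmidtFin a i, y⟫ / ⟪gramSchmidtFin a i, a i⟫ = 1 / 2 := by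
    have hne : ‖gramSchmidtFin a i‖ ^ 2 ≠ 0 :=
      pow_ne_zero 2 (norm_ne_zero_iff.mpr (gramSchmidt_ne_zero i ha))
    have hdiag : ⟪gramSchmidtFin a i, a i⟫ = ‖gramSchmidtFin a i‖ ^ 2 :=
      inner_gramSchmidt_self_right a i
    rw [hy, real_inner_smul_right, inner_sum_eq_norm_sq_of_pairwise_inner_eq_zero hortho, hdiag,
      mul_div_assoc, div_self hne, mul_one]
  have hz : ∀ j, babaiZ a (gramSchmidtFin a) y j = 0 :=
    babaiZ_eq_zero fun i => by rw [hcoeff, roundHalfDown_half]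
  calc ‖(∑ j, (babaiZ a (gramSchmidtFin a) y j : ℝ) • a j) - y‖ ^ 2
      = (1 / 2) ^ 2 * ‖∑ j, gramSchmidtFin a j‖ ^ 2 := by
        rw [Finset.sum_eq_zero fun j _ => by rw [hz j, Int.cast_zero, zero_smul], zero_sub,
          norm_neg, hy, norm_smul, mul_pow, Real.norm_of_nonneg (by norm_num)]
    _ = (1 / 4) * ∑ j, ‖gramSchmidtFin a j‖ ^ 2 := by
        rw [norm_sum_sq_of_pairwise_inner_eq_zero hortho]; norm_num
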